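/- Let D ≥ 1, let K and L be constant skew-symmetric real D×D matrices, let S : ℝ^D → ℝ be continuously differentiable, and let t₀ < t₁. Let Z : ℝ × ℝ → ℝ^D, written Z(t,x), be twice continuously differentiable and 1-periodic in x (Z(t, x+1) = Z(t, x) for all t, x). Suppose the scheme identity tested with ∂_t Z holds: ∫_{t₀}^{t₁} ∫₀¹ ( K ∂_t Z + L ∂_x Z − ∇S(Z) )·(∂_t Z) dx dt = 0. Then the discrete energy is conserved over the time interval: ∫₀¹ [ ½ Z·(L ∂_x Z) − S(Z) ](t₁, x) dx = ∫₀¹ [ ½ Z·(L ∂_x Z) − S(Z) ](t₀, x) dx. -/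

import Mathlib

open Matrix intervalIntegral

/-- Gradient of `S : ℝ^D → ℝ`, componentwise via the Fréchet derivative. -/
noncomputable def grad {D : ℕ} (S : (Fin D → ℝ) → ℝ) (p : Fin D → ℝ) : Fin D → ℝ :=
  fun i => fderiv ℝ S p (Pi.single i 1)

/-- Partial derivative in the first (time) variable. -/
noncomputable def pt {E : Type*} [NormedAddCommGroup E] [NormedSpace ℝ E]
    (z : ℝ × ℝ → E) (p : ℝ × ℝ) : E :=
  deriv (fun s => z (s, p.2)) p.1

/-- Partial derivative in the second (space) variable. -/
noncomputable def px {E : Type*} [NormedAddCommGroup E] [NormedSpace ℝ E]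
    (z : ℝ × ℝ → E) (p : ℝ × ℝ) : E :=
  deriv (fun y => z (p.1, y)) p.2

/-!
For the energy density `e = ½ Z·L∂ₓZ − S(Z)` and the energy flux `g = ½ ∂ₜZ·LZ`, the local
conservation law `∂ₜe + ∂ₓg = (K∂ₜZ + L∂ₓZ − ∇S(Z))·∂ₜZ` holds pointwise: the `K`-term vanishes
because `K` is skew, and the mixed terms `Z·L∂ₜ∂ₓZ` and `∂ₓ∂ₜZ·LZ` cancel because `L` is skew and
second derivatives commute. Integrating over `[t₀, t₁] × [0, 1]`, the flux contributes
`g(t, 1) − g(t, 0) = 0` by periodicity, while by Fubini and the fundamental theorem of calculus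
the density contributes the change of energy from `t₀` to `t₁`.
-/

section DotProduct

variable {𝕜 ι : Type*} [NontriviallyNormedField 𝕜] [Fintype ι]

theorem HasDerivAt.dotProduct {f g : 𝕜 → ι → 𝕜} {f' g' : ι → 𝕜} {t : 𝕜}
    (hf : HasDerivAt f f' t) (hg : HasDerivAt g g' t) :
    HasDerivAt (fun s => f s ⬝ᵥ g s) (f' ⬝ᵥ g t + f t ⬝ᵥ g') t := by
  simp only [_root_.dotProduct]
  rw [← Finset.sum_add_distrib]
  exact HasDerivAt.fun_sum fun i _ => (hasDerivAt_pi.1 hf i).mul (hasDerivAt_pi.1 hg i)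

theorem HasDerivAt.matrix_mulVec {κ : Type*} (M : Matrix κ ι 𝕜) {f : 𝕜 → ι → 𝕜} {f' : ι → 𝕜}
    {t : 𝕜} (hf : HasDerivAt f f' t) : HasDerivAt (fun s => M *ᵥ f s) (M *ᵥ f') t :=
  hasDerivAt_pi.2 fun i => by simpa [mulVec] using (hasDerivAt_const t (M i)).dotProduct hf

variable {E : Type*} [NormedAddCommGroup E] [NormedSpace 𝕜 E] {n : WithTop ℕ∞}

theorem ContDiff.dotProduct {f g : E → ι → 𝕜} (hf : ContDiff 𝕜 n f) (hg : ContDiff 𝕜 n g) :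
    ContDiff 𝕜 n fun y => f y ⬝ᵥ g y :=
  ContDiff.sum fun i _ => (contDiff_pi.1 hf i).mul (contDiff_pi.1 hg i)

theorem ContDiff.matrix_mulVec {κ : Type*} [Fintype κ] (M : Matrix κ ι 𝕜) {f : E → ι → 𝕜}
    (hf : ContDiff 𝕜 n f) : ContDiff 𝕜 n fun y => M *ᵥ f y :=
  contDiff_pi.2 fun _ => contDiff_const.dotProduct hf

end DotProduct

section SkewSymmetric

variable {ι R : Type*} [Fintype ι] [CommRing R] {M : Matrix ι ι R}

theorem dotProduct_mulVec_eq_neg_of_transpose_eq_neg (hM : Mᵀ = -M) (u v : ι → R) :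
    u ⬝ᵥ M *ᵥ v = -(v ⬝ᵥ M *ᵥ u) := by
  rw [dotProduct_mulVec, ← mulVec_transpose, hM, neg_mulVec, neg_dotProduct, dotProduct_comm]

theorem mulVec_dotProduct_self_of_transpose_eq_neg [NoZeroDivisors R] [CharZero R]
    (hM : Mᵀ = -M) (v : ι → R) : M *ᵥ v ⬝ᵥ v = 0 := by
  rw [dotProduct_comm]
  exact self_eq_neg.1 (dotProduct_mulVec_eq_neg_of_transpose_eq_neg hM v v)

end SkewSymmetric

theorem grad_dotProduct {D : ℕ} (S : (Fin D → ℝ) → ℝ) (p v : Fin D → ℝ) :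
    grad S p ⬝ᵥ v = fderiv ℝ S p v := by
  conv_rhs => rw [← Finset.univ_sum_single v, map_sum]
  refine Finset.sum_congr rfl fun i _ => ?_
  have hsingle : Pi.single i (v i) = v i • Pi.single i (1 : ℝ) := by
    rw [← Pi.single_smul, smul_eq_mul, mul_one]
  rw [grad, hsingle, map_smul, smul_eq_mul, mul_comm]

section PartialDerivatives

variable {E : Type*} [NormedAddCommGroup E] [NormedSpace ℝ E] {f : ℝ × ℝ → E}

theorem hasDerivAt_pt {t x : ℝ} (hf : DifferentiableAt ℝ f (t, x)) :
    HasDerivAt (fun s => f (s, x)) (pt f (t, x)) t :=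
  (hf.comp t (differentiableAt_id.prodMk (differentiableAt_const x))).hasDerivAt

theorem hasDerivAt_px {t x : ℝ} (hf : DifferentiableAt ℝ f (t, x)) :
    HasDerivAt (fun y => f (t, y)) (px f (t, x)) x :=
  (hf.comp x ((differentiableAt_const t).prodMk differentiableAt_id)).hasDerivAt

theorem pt_eq_fderiv {p : ℝ × ℝ} (hf : DifferentiableAt ℝ f p) : pt f p = fderiv ℝ f p (1, 0) :=
  (hf.hasFDerivAt.comp_hasDerivAt p.1 ((hasDerivAt_id p.1).prodMk (hasDerivAt_const p.1 p.2))).deriv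

theorem px_eq_fderiv {p : ℝ × ℝ} (hf : DifferentiableAt ℝ f p) : px f p = fderiv ℝ f p (0, 1) :=
  (hf.hasFDerivAt.comp_hasDerivAt p.2 ((hasDerivAt_const p.2 p.1).prodMk (hasDerivAt_id p.2))).deriv

variable {m n : WithTop ℕ∞}

theorem ContDiff.pt (hf : ContDiff ℝ n f) (hmn : m + 1 ≤ n) : ContDiff ℝ m (pt f) := by
  have hf1 : Differentiable ℝ f := (hf.of_le (le_add_self.trans hmn)).differentiable one_ne_zero
  rw [show _root_.pt f = fun p => fderiv ℝ f p (1, 0) from funext fun p => pt_eq_fderiv (hf1 p)]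
  exact (hf.fderiv_right hmn).clm_apply contDiff_const

theorem ContDiff.px (hf : ContDiff ℝ n f) (hmn : m + 1 ≤ n) : ContDiff ℝ m (px f) := by
  have hf1 : Differentiable ℝ f := (hf.of_le (le_add_self.trans hmn)).differentiable one_ne_zero
  rw [show _root_.px f = fun p => fderiv ℝ f p (0, 1) from funext fun p => px_eq_fderiv (hf1 p)]
  exact (hf.fderiv_right hmn).clm_apply contDiff_const

theorem ContDiff.continuous_pt (hf : ContDiff ℝ 1 f) : Continuous (_root_.pt f) :=
  (hf.pt (m := 0) (by simp)).continuous

theorem ContDiff.continuous_px (hf : ContDiff ℝ 1 f) : Continuous (_root_.px f) :=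
  (hf.px (m := 0) (by simp)).continuous

theorem pt_px_comm (hf : ContDiff ℝ 2 f) : pt (px f) = px (pt f) := by
  have hf1 : Differentiable ℝ f := hf.differentiable two_ne_zero
  have hf' : Differentiable ℝ (fderiv ℝ f) := (hf.fderiv_right le_rfl).differentiable one_ne_zero
  rw [show px f = fun p => fderiv ℝ f p (0, 1) from funext fun p => px_eq_fderiv (hf1 p),
    show pt f = fun p => fderiv ℝ f p (1, 0) from funext fun p => pt_eq_fderiv (hf1 p)]
  ext ⟨t, x⟩
  have ht : HasDerivAt (fun s => fderiv ℝ f (s, x) (0, 1))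
      (fderiv ℝ (fderiv ℝ f) (t, x) (1, 0) (0, 1)) t := by
    simpa only [pt_eq_fderiv (hf' _), map_zero, add_zero] using
      (hasDerivAt_pt (hf' (t, x))).clm_apply (hasDerivAt_const t ((0 : ℝ), (1 : ℝ)))
  have hx : HasDerivAt (fun y => fderiv ℝ f (t, y) (1, 0))
      (fderiv ℝ (fderiv ℝ f) (t, x) (0, 1) (1, 0)) x := by
    simpa only [px_eq_fderiv (hf' _), map_zero, add_zero] using
      (hasDerivAt_px (hf' (t, x))).clm_apply (hasDerivAt_const x ((1 : ℝ), (0 : ℝ)))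
  rw [hf.contDiffAt.isSymmSndFDerivAt (by simp) (1, 0) (0, 1)] at ht
  exact ht.deriv.trans hx.deriv.symm

end PartialDerivatives

section Integration

variable {E : Type*} [NormedAddCommGroup E] [NormedSpace ℝ E] [CompleteSpace E]

theorem integral_pt {f : ℝ × ℝ → E} (hf : ContDiff ℝ 1 f) (a b x : ℝ) :
    ∫ t in a..b, pt f (t, x) = f (b, x) - f (a, x) :=
  integral_eq_sub_of_hasDerivAt (fun _ _ => hasDerivAt_pt (hf.differentiable one_ne_zero _))
    ((hf.continuous_pt.comp (Continuous.prodMk_left x)).intervalIntegrable a b)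

theorem integral_px {f : ℝ × ℝ → E} (hf : ContDiff ℝ 1 f) (t a b : ℝ) :
    ∫ x in a..b, px f (t, x) = f (t, b) - f (t, a) :=
  integral_eq_sub_of_hasDerivAt (fun _ _ => hasDerivAt_px (hf.differentiable one_ne_zero _))
    ((hf.continuous_px.comp (Continuous.prodMk_right t)).intervalIntegrable a b)

theorem integral_integral_pt {e : ℝ × ℝ → E} (he : ContDiff ℝ 1 e) (t₀ t₁ a b : ℝ) :
    ∫ t in t₀..t₁, ∫ x in a..b, pt e (t, x) =
      (∫ x in a..b, e (t₁, x)) - ∫ x in a..b, e (t₀, x) := by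
  have he' : Continuous e := he.continuous
  rw [MeasureTheory.intervalIntegral_intervalIntegral_swap, ← integral_sub]
  · exact integral_congr fun x _ => integral_pt he t₀ t₁ x
  · exact (he'.comp (Continuous.prodMk_right t₁)).intervalIntegrable a b
  · exact (he'.comp (Continuous.prodMk_right t₀)).intervalIntegrable a b
  · exact (he.continuous_pt.continuousOn.integrableOn_compact
      (isCompact_uIcc.prod isCompact_uIcc)).mono_set
      (Set.prod_mono Set.uIoc_subset_uIcc Set.uIoc_subset_uIcc)

theorem integral_integral_pt_add_px {e g : ℝ × ℝ → E} (he : ContDiff ℝ 1 e)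
    (hg : ContDiff ℝ 1 g) {a b : ℝ} (hgab : ∀ t, g (t, b) = g (t, a)) (t₀ t₁ : ℝ) :
    ∫ t in t₀..t₁, ∫ x in a..b, (pt e (t, x) + px g (t, x)) =
      (∫ x in a..b, e (t₁, x)) - ∫ x in a..b, e (t₀, x) := by
  rw [← integral_integral_pt he]
  refine integral_congr fun t _ => ?_
  rw [integral_add, integral_px hg, hgab, sub_self, add_zero]
  · exact (he.continuous_pt.comp (Continuous.prodMk_right t)).intervalIntegrable a b
  · exact (hg.continuous_px.comp (Continuous.prodMk_right t)).intervalIntegrable a b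

end Integration

noncomputable def energyDensity {D : ℕ} (L : Matrix (Fin D) (Fin D) ℝ) (S : (Fin D → ℝ) → ℝ)
    (Z : ℝ × ℝ → Fin D → ℝ) (p : ℝ × ℝ) : ℝ :=
  1 / 2 * (Z p ⬝ᵥ L *ᵥ px Z p) - S (Z p)

noncomputable def energyFlux {D : ℕ} (L : Matrix (Fin D) (Fin D) ℝ) (Z : ℝ × ℝ → Fin D → ℝ)
    (p : ℝ × ℝ) : ℝ :=
  1 / 2 * (pt Z p ⬝ᵥ L *ᵥ Z p)

section Energy

variable {D : ℕ} (L : Matrix (Fin D) (Fin D) ℝ) {S : (Fin D → ℝ) → ℝ} {Z : ℝ × ℝ → Fin D → ℝ}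

theorem contDiff_energyDensity (hS : ContDiff ℝ 1 S) (hZ : ContDiff ℝ 2 Z) :
    ContDiff ℝ 1 (energyDensity L S Z) :=
  have hZ1 : ContDiff ℝ 1 Z := hZ.of_le one_le_two
  (contDiff_const.mul (hZ1.dotProduct ((hZ.px (by norm_num)).matrix_mulVec L))).sub (hS.comp hZ1)

theorem contDiff_energyFlux (hZ : ContDiff ℝ 2 Z) : ContDiff ℝ 1 (energyFlux L Z) :=
  contDiff_const.mul ((hZ.pt (by norm_num)).dotProduct ((hZ.of_le one_le_two).matrix_mulVec L))

theorem pt_energyDensity (hS : Differentiable ℝ S) (hZ : ContDiff ℝ 2 Z) (p : ℝ × ℝ) :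
    pt (energyDensity L S Z) p =
      1 / 2 * (pt Z p ⬝ᵥ L *ᵥ px Z p + Z p ⬝ᵥ L *ᵥ pt (px Z) p) - fderiv ℝ S (Z p) (pt Z p) := by
  obtain ⟨t, x⟩ := p
  have hZt := hasDerivAt_pt (hZ.differentiable two_ne_zero (t, x))
  have hZxt := hasDerivAt_pt ((hZ.px (m := 1) (by norm_num)).differentiable one_ne_zero (t, x))
  exact (((hZt.dotProduct (hZxt.matrix_mulVec L)).const_mul _).sub
    ((hS _).hasFDerivAt.comp_hasDerivAt t hZt)).deriv

theorem px_energyFlux (hZ : ContDiff ℝ 2 Z) (p : ℝ × ℝ) :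
    px (energyFlux L Z) p = 1 / 2 * (pt (px Z) p ⬝ᵥ L *ᵥ Z p + pt Z p ⬝ᵥ L *ᵥ px Z p) := by
  obtain ⟨t, x⟩ := p
  have hZx := hasDerivAt_px (hZ.differentiable two_ne_zero (t, x))
  have hZtx := hasDerivAt_px ((hZ.pt (m := 1) (by norm_num)).differentiable one_ne_zero (t, x))
  rw [pt_px_comm hZ]
  exact ((hZtx.dotProduct (hZx.matrix_mulVec L)).const_mul _).deriv

theorem energyFlux_add_one (hper : ∀ t x : ℝ, Z (t, x + 1) = Z (t, x)) (t x : ℝ) :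
    energyFlux L Z (t, x + 1) = energyFlux L Z (t, x) := by
  have hZt : pt Z (t, x + 1) = pt Z (t, x) := congrArg (deriv · t) (funext fun s => hper s x)
  simp only [energyFlux, hZt, hper]

theorem pt_energyDensity_add_px_energyFlux {K : Matrix (Fin D) (Fin D) ℝ} (hK : Kᵀ = -K)
    (hL : Lᵀ = -L) (hS : Differentiable ℝ S) (hZ : ContDiff ℝ 2 Z) (p : ℝ × ℝ) :
    pt (energyDensity L S Z) p + px (energyFlux L Z) p =
      (K *ᵥ pt Z p + L *ᵥ px Z p - grad S (Z p)) ⬝ᵥ pt Z p := by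
  rw [pt_energyDensity L hS hZ, px_energyFlux L hZ, sub_dotProduct, add_dotProduct,
    mulVec_dotProduct_self_of_transpose_eq_neg hK, dotProduct_comm (L *ᵥ px Z p), grad_dotProduct,
    dotProduct_mulVec_eq_neg_of_transpose_eq_neg hL (pt (px Z) p)]
  ring

end Energy

theorem discrete_energy_conservation_general
    (D : ℕ)
    (K L : Matrix (Fin D) (Fin D) ℝ)
    (hK : Kᵀ = -K) (hL : Lᵀ = -L)
    (S : (Fin D → ℝ) → ℝ) (hS : ContDiff ℝ 1 S)
    (t₀ t₁ : ℝ)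
    (Z : ℝ × ℝ → Fin D → ℝ) (hZ : ContDiff ℝ 2 Z)
    (hper : ∀ t x : ℝ, Z (t, x + 1) = Z (t, x))
    (hscheme :
      (∫ t in t₀..t₁, ∫ x in (0:ℝ)..1,
        ((K.mulVec (pt Z (t, x)) + L.mulVec (px Z (t, x)) - grad S (Z (t, x)))
          ⬝ᵥ pt Z (t, x))) = 0) :
    (∫ x in (0:ℝ)..1,
        ((1 / 2 : ℝ) * (Z (t₁, x) ⬝ᵥ L.mulVec (px Z (t₁, x))) - S (Z (t₁, x))))
      = ∫ x in (0:ℝ)..1,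
          ((1 / 2 : ℝ) * (Z (t₀, x) ⬝ᵥ L.mulVec (px Z (t₀, x))) - S (Z (t₀, x))) := by
  have h := integral_integral_pt_add_px (contDiff_energyDensity L hS hZ) (contDiff_energyFlux L hZ)
    (fun t => by simpa only [zero_add] using energyFlux_add_one L hper t 0) t₀ t₁
  simp only [pt_energyDensity_add_px_energyFlux L hK hL (hS.differentiable one_ne_zero) hZ,
    hscheme] at h
  exact sub_eq_zero.1 h.symm

/-- If the space-time finite element scheme tested with `∂_t Z` holds, then the
discrete energy `∫₀¹ (½ Z·(L ∂_x Z) − S(Z)) dx` is conserved from `t₀` to `t₁`. -/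
theorem discrete_energy_conservation
    (D : ℕ) (hD : 1 ≤ D)
    (K L : Matrix (Fin D) (Fin D) ℝ)
    (hK : Kᵀ = -K) (hL : Lᵀ = -L)
    (S : (Fin D → ℝ) → ℝ) (hS : ContDiff ℝ 1 S)
    (t₀ t₁ : ℝ) (ht : t₀ < t₁)
    (Z : ℝ × ℝ → Fin D → ℝ) (hZ : ContDiff ℝ 2 Z)
    (hper : ∀ t x : ℝ, Z (t, x + 1) = Z (t, x))
    (hscheme :
      (∫ t in t₀..t₁, ∫ x in (0:ℝ)..1,
        ((K.mulVec (pt Z (t, x)) + L.mulVec (px Z (t, x)) - grad S (Z (t, x)))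
          ⬝ᵥ pt Z (t, x))) = 0) :
    (∫ x in (0:ℝ)..1,
        ((1 / 2 : ℝ) * (Z (t₁, x) ⬝ᵥ L.mulVec (px Z (t₁, x))) - S (Z (t₁, x))))
      = ∫ x in (0:ℝ)..1,
          ((1 / 2 : ℝ) * (Z (t₀, x) ⬝ᵥ L.mulVec (px Z (t₀, x))) - S (Z (t₀, x))) :=
  discrete_energy_conservation_general D K L hK hL S hS t₀ t₁ Z hZ hper hscheme
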